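/- arXiv:2101.07449 — 2 statements merged into one kernel-verified Lean document; each statement's English description precedes it below -/
import Mathlib

section
/- Let α = (1+√5)/2 and let F_n denote the Fibonacci numbers (F_1 = F_2 = 1). Then the absolutely convergent double series identity ∑_{m=1}^∞ ∑_{n=1}^∞ (α^{-m} F_m + α^{-n} F_n − α^{-(m+n)} F_{m+n}) / (m (m+n)^2) = ∑_{m=1}^∞ α^{-m} F_m / m^3 holds. -/
open scoped BigOperators

/-- The golden ratio `(1+√5)/2`. -/
noncomputable def goldenAlpha : ℝ := (1 + Real.sqrt 5) / 2

/-!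
The series is linear in the bounded sequence `b n = α⁻¹ ^ n * F n`, and the identity holds for
every bounded `b`. Split the numerator `b m + b n - b (m + n)` into its three terms. For the first
two, sum over the other index and symmetrise: `1/(m(m+n)²) + 1/(n(m+n)²) = (1/m²)(1/n - 1/(m+n))`
telescopes to `H m / m²`, with `H` the harmonic numbers, so together they give `∑ b m H m / m²`.
Summing the third along the diagonals `m + n = k` gives `∑ b k H (k-1) / k²`, and the difference
is `∑ b k / k³` since `H k - H (k-1) = 1/k`. Absolute convergence comes from
`1/(m(m+n)²) ≤ (mn)^(-3/2)`.
-/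

open Finset Filter Topology Real

lemma hasSum_sub_add_of_antitone {f : ℕ → ℝ} (hf : Antitone f) (hf₀ : Tendsto f atTop (𝓝 0))
    (k : ℕ) : HasSum (fun n => f n - f (n + k)) (∑ i ∈ range k, f i) := by
  have partial_sum (N : ℕ) : ∑ n ∈ range N, (f n - f (n + k))
      = ∑ i ∈ range k, f i - ∑ i ∈ range k, f (N + i) := by
    have h := sum_range_add f k N
    rw [add_comm k N, sum_range_add] at h
    simp only [sum_sub_distrib, add_comm _ k]
    linarith
  rw [hasSum_iff_tendsto_nat_of_nonneg (fun n => sub_nonneg.2 (hf (Nat.le_add_right n k)))]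
  simp only [partial_sum]
  simpa using tendsto_const_nhds.sub <|
    tendsto_finsetSum _ fun i _ => hf₀.comp (tendsto_add_atTop_nat i)

lemma one_div_mul_add_sq_add_one_div_mul_add_sq {K : Type*} [Field K] {x y : K} (hx : x ≠ 0)
    (hy : y ≠ 0) (hxy : x + y ≠ 0) :
    1 / (x * (x + y) ^ 2) + 1 / (y * (y + x) ^ 2) = 1 / x ^ 2 * (1 / y - 1 / (x + y)) := by
  rw [add_comm y x]
  field_simp
  ring

lemma harmonic_cast_eq (n : ℕ) : (harmonic n : ℝ) = ∑ i ∈ range n, 1 / ((i : ℝ) + 1) := by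
  simp [harmonic]

lemma hasSum_one_div_mul_add_sq_add_swap (k : ℕ) :
    HasSum (fun n : ℕ => 1 / ((k + 1 : ℝ) * ((k + 1 : ℝ) + (n + 1 : ℝ)) ^ 2)
        + 1 / ((n + 1 : ℝ) * ((n + 1 : ℝ) + (k + 1 : ℝ)) ^ 2))
      (harmonic (k + 1) / (k + 1 : ℝ) ^ 2) := by
  have hf : Antitone fun n : ℕ => 1 / ((n : ℝ) + 1) := fun m n h =>
    one_div_le_one_div_of_le (by positivity) (by exact_mod_cast Nat.succ_le_succ h)
  have h := (hasSum_sub_add_of_antitone hf tendsto_one_div_add_atTop_nhds_zero_nat (k + 1)).mul_left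
    (1 / (k + 1 : ℝ) ^ 2)
  rw [← harmonic_cast_eq, mul_comm, ← div_eq_mul_one_div] at h
  refine h.congr_fun fun n => ?_
  rw [one_div_mul_add_sq_add_one_div_mul_add_sq (by positivity) (by positivity) (by positivity)]
  push_cast
  ring_nf

/-- The right-hand side is written as a function of `k + 1`, ready for an index shift. -/
lemma sum_antidiagonal_div_mul_add_sq (g : ℕ → ℝ) (k : ℕ) :
    ∑ p ∈ antidiagonal k,
        g ((p.1 + 1) + (p.2 + 1)) / ((p.1 + 1 : ℝ) * ((p.1 + 1 : ℝ) + (p.2 + 1 : ℝ)) ^ 2)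
      = g (k + 1 + 1) * harmonic (k + 1) / (((k + 1 : ℕ) : ℝ) + 1) ^ 2 := by
  have h (p) (hp : p ∈ antidiagonal k) :
      g ((p.1 + 1) + (p.2 + 1)) / ((p.1 + 1 : ℝ) * ((p.1 + 1 : ℝ) + (p.2 + 1 : ℝ)) ^ 2)
        = g (k + 1 + 1) / (((k + 1 : ℕ) : ℝ) + 1) ^ 2 * (1 / (p.1 + 1 : ℝ)) := by
    rw [HasAntidiagonal.mem_antidiagonal] at hp
    have hc : (p.1 + 1 : ℝ) + (p.2 + 1 : ℝ) = ((k + 1 : ℕ) : ℝ) + 1 := by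
      rw [← hp]; push_cast; ring
    rw [show p.1 + 1 + (p.2 + 1) = k + 1 + 1 by omega, hc]
    field_simp
  rw [sum_congr rfl h, ← mul_sum, Nat.sum_antidiagonal_eq_sum_range_succ_mk, harmonic_cast_eq]
  ring

lemma rpow_three_halves_mul_rpow_three_halves_le {x y : ℝ} (hx : 0 < x) (hy : 0 < y) :
    x ^ (3 / 2 : ℝ) * y ^ (3 / 2 : ℝ) ≤ x * (x + y) ^ 2 := by
  have hxy : 0 < x + y := by positivity
  have split (z : ℝ) (hz : 0 < z) : z ^ (3 / 2 : ℝ) = z * z ^ (1 / 2 : ℝ) := by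
    rw [← Real.rpow_one_add' hz.le (by norm_num)]; norm_num
  have hsq : (x + y) ^ 2 = (x + y) ^ (1 / 2 : ℝ) * (x + y) ^ (3 / 2 : ℝ) := by
    rw [← Real.rpow_add hxy]; norm_num
  rw [split x hx, hsq, mul_assoc]
  gcongr <;> linarith

lemma summable_one_div_mul_add_sq :
    Summable fun p : ℕ × ℕ => 1 / ((p.1 + 1 : ℝ) * ((p.1 + 1 : ℝ) + (p.2 + 1 : ℝ)) ^ 2) := by
  have hs : Summable fun n : ℕ => 1 / ((n : ℝ) + 1) ^ (3 / 2 : ℝ) := by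
    simpa using (summable_nat_add_iff 1).2 (Real.summable_one_div_nat_rpow.2 (by norm_num))
  refine (hs.mul_of_nonneg hs (fun _ => by positivity) (fun _ => by positivity)).of_nonneg_of_le
    (fun _ => by positivity) fun p => ?_
  rw [one_div_mul_one_div]
  exact one_div_le_one_div_of_le (by positivity)
    (rpow_three_halves_mul_rpow_three_halves_le (by positivity) (by positivity))

lemma HasSum.sum_antidiagonal {α : Type*} [AddCommMonoid α] [TopologicalSpace α] [ContinuousAdd α]
    [RegularSpace α] {f : ℕ × ℕ → α} {a : α} (h : HasSum f a) :
    HasSum (fun n => ∑ p ∈ antidiagonal n, f p) a :=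
  (HasAntidiagonal.sigmaAntidiagonalEquivProd.hasSum_iff.2 h).sigma fun n => by
    rw [← sum_coe_sort]
    exact hasSum_fintype _

theorem exists_hasSum_add_sub_div_mul_add_sq {b : ℕ → ℝ} {C : ℝ} (hb : ∀ n, |b n| ≤ C) :
    ∃ a, HasSum (fun p : ℕ × ℕ => (b (p.1 + 1) + b (p.2 + 1) - b ((p.1 + 1) + (p.2 + 1)))
        / ((p.1 + 1 : ℝ) * ((p.1 + 1 : ℝ) + (p.2 + 1 : ℝ)) ^ 2)) a ∧
      HasSum (fun m : ℕ => b (m + 1) / (m + 1 : ℝ) ^ 3) a := by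
  have summable (i : ℕ × ℕ → ℕ) : Summable fun p : ℕ × ℕ =>
      b (i p) / ((p.1 + 1 : ℝ) * ((p.1 + 1 : ℝ) + (p.2 + 1 : ℝ)) ^ 2) := by
    refine (summable_one_div_mul_add_sq.mul_left C).of_norm_bounded fun p => ?_
    have hD : 0 < (p.1 + 1 : ℝ) * ((p.1 + 1 : ℝ) + (p.2 + 1 : ℝ)) ^ 2 := by positivity
    rw [mul_one_div, Real.norm_eq_abs, abs_div, abs_of_pos hD]
    exact div_le_div_of_nonneg_right (hb _) hD.le
  obtain ⟨A₁, h₁⟩ := summable fun p => p.1 + 1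
  obtain ⟨A₂, h₂⟩ := summable fun p => p.2 + 1
  obtain ⟨A₃, h₃⟩ := summable fun p => (p.1 + 1) + (p.2 + 1)
  refine ⟨A₁ + A₂ - A₃, ((h₁.add h₂).sub h₃).congr_fun fun p => by ring, ?_⟩
  have row : HasSum (fun m : ℕ => b (m + 1) *
      ∑' n : ℕ, 1 / ((m + 1 : ℝ) * ((m + 1 : ℝ) + (n + 1 : ℝ)) ^ 2)) A₁ :=
    h₁.prod_fiberwise fun m => by
      simpa only [mul_one_div] using
        (summable_one_div_mul_add_sq.prod_factor m).hasSum.mul_left (b (m + 1))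
  have column : HasSum (fun n : ℕ => b (n + 1) *
      ∑' m : ℕ, 1 / ((m + 1 : ℝ) * ((m + 1 : ℝ) + (n + 1 : ℝ)) ^ 2)) A₂ :=
    ((Equiv.prodComm ℕ ℕ).hasSum_iff.2 h₂).prod_fiberwise fun n => by
      simpa only [Function.comp_apply, Equiv.prodComm_apply, Prod.swap_prod_mk, mul_one_div] using
        (summable_one_div_mul_add_sq.prod_symm.prod_factor n).hasSum.mul_left (b (n + 1))
  have diagonal : HasSum (fun k : ℕ => b (k + 1) * harmonic k / ((k : ℝ) + 1) ^ 2) A₃ := by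
    have h := h₃.sum_antidiagonal
    simp only [sum_antidiagonal_div_mul_add_sq] at h
    rw [← hasSum_nat_add_iff' 1]
    simpa using h
  refine ((row.add column).sub diagonal).congr_fun fun k => Eq.symm ?_
  have inner : (∑' n : ℕ, 1 / ((k + 1 : ℝ) * ((k + 1 : ℝ) + (n + 1 : ℝ)) ^ 2))
      + ∑' m : ℕ, 1 / ((m + 1 : ℝ) * ((m + 1 : ℝ) + (k + 1 : ℝ)) ^ 2)
      = harmonic (k + 1) / (k + 1 : ℝ) ^ 2 :=
    ((summable_one_div_mul_add_sq.prod_factor k).hasSum.add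
      (summable_one_div_mul_add_sq.prod_symm.prod_factor k).hasSum).unique
      (hasSum_one_div_mul_add_sq_add_swap k)
  rw [← mul_add, inner, harmonic_succ]
  push_cast
  field_simp
  ring

lemma fib_le_goldenRatio_pow (n : ℕ) : (Nat.fib n : ℝ) ≤ goldenRatio ^ n := by
  cases n with
  | zero => simp
  | succ n =>
    calc (Nat.fib (n + 1) : ℝ) ≤ goldenRatio * Nat.fib (n + 1) :=
          le_mul_of_one_le_left (by positivity) one_lt_goldenRatio.le
      _ ≤ goldenRatio * Nat.fib (n + 1) + Nat.fib n := le_add_of_nonneg_right (by positivity)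
      _ = goldenRatio ^ (n + 1) := goldenRatio_mul_fib_succ_add_fib n

lemma abs_inv_goldenRatio_pow_mul_fib_le_one (n : ℕ) : |goldenRatio⁻¹ ^ n * Nat.fib n| ≤ 1 := by
  rw [abs_of_nonneg (by positivity), inv_pow, inv_mul_le_iff₀ (by positivity), mul_one]
  exact fib_le_goldenRatio_pow n

/-- sum formula for a double series involving Fibonacci numbers. -/
theorem fibonacci_double_series_sum_formula :
    Summable (fun p : ℕ × ℕ =>
      (goldenAlpha⁻¹ ^ (p.1 + 1) * (Nat.fib (p.1 + 1) : ℝ)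
        + goldenAlpha⁻¹ ^ (p.2 + 1) * (Nat.fib (p.2 + 1) : ℝ)
        - goldenAlpha⁻¹ ^ ((p.1 + 1) + (p.2 + 1)) * (Nat.fib ((p.1 + 1) + (p.2 + 1)) : ℝ))
      / ((p.1 + 1 : ℝ) * ((p.1 + 1 : ℝ) + (p.2 + 1 : ℝ)) ^ 2)) ∧
    Summable (fun m : ℕ =>
      goldenAlpha⁻¹ ^ (m + 1) * (Nat.fib (m + 1) : ℝ) / (m + 1 : ℝ) ^ 3) ∧
    (∑' p : ℕ × ℕ,
      (goldenAlpha⁻¹ ^ (p.1 + 1) * (Nat.fib (p.1 + 1) : ℝ)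
        + goldenAlpha⁻¹ ^ (p.2 + 1) * (Nat.fib (p.2 + 1) : ℝ)
        - goldenAlpha⁻¹ ^ ((p.1 + 1) + (p.2 + 1)) * (Nat.fib ((p.1 + 1) + (p.2 + 1)) : ℝ))
      / ((p.1 + 1 : ℝ) * ((p.1 + 1 : ℝ) + (p.2 + 1 : ℝ)) ^ 2))
    = ∑' m : ℕ, goldenAlpha⁻¹ ^ (m + 1) * (Nat.fib (m + 1) : ℝ) / (m + 1 : ℝ) ^ 3 := by
  obtain ⟨a, hl, hr⟩ := exists_hasSum_add_sub_div_mul_add_sq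
    (b := fun n => goldenAlpha⁻¹ ^ n * (Nat.fib n : ℝ)) abs_inv_goldenRatio_pow_mul_fib_le_one
  exact ⟨hl.summable, hr.summable, hl.tsum_eq.trans hr.tsum_eq.symm⟩
end

section
/- Let r ≥ 1 and let s_1, …, s_r ∈ ℂ satisfy Re(s_{r−k+1} + ⋯ + s_r) > k for every k with 1 ≤ k ≤ r. Then the Euler–Zagier r-fold series ∑_{m_1=1}^∞ ⋯ ∑_{m_r=1}^∞ m_1^{-s_1} (m_1+m_2)^{-s_2} ⋯ (m_1+⋯+m_r)^{-s_r} converges absolutely. -/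
open scoped BigOperators

/-- The partial sum `m_1 + ⋯ + m_{i+1}` (with each variable shifted to be `≥ 1`). -/
def partialSum {r : ℕ} (m : Fin r → ℕ) (i : Fin r) : ℕ :=
  ∑ k ∈ Finset.Iic i, (m k + 1)

/-!
The partial sums `M_i = m_1 + ⋯ + m_i` are nondecreasing, so by Abel summation
`∑ σ_i log M_i` is a nonnegative combination of the tail sums `σ_j + ⋯ + σ_r` (the weights are
the increments of `log M_i`). A tail sum of `k` exponents has real part `> k`, hence `≥ k e` for
one `e > 1`, and the term is bounded by `∏ M_i^{-e} ≤ ∏ (m_i + 1)^{-e}`, a product of convergent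
`p`-series.
-/

open Finset Filter Topology

def tailIndices (r j : ℕ) : Finset (Fin r) :=
  univ.filter fun i => j ≤ (i : ℕ)

theorem summable_pi_prod {ι κ : Type*} [Fintype ι] {g : ι → κ → ℝ} (hg0 : ∀ i k, 0 ≤ g i k)
    (hg : ∀ i, Summable (g i)) : Summable (fun m : ι → κ => ∏ i, g i (m i)) := by
  classical
  refine summable_of_sum_le (c := ∏ i, ∑' k, g i k)
    (fun m => prod_nonneg fun i _ => hg0 i (m i)) fun u => ?_
  calc ∑ m ∈ u, ∏ i, g i (m i)
      ≤ ∑ m ∈ Fintype.piFinset (fun i => u.image (· i)), ∏ i, g i (m i) :=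
        sum_le_sum_of_subset_of_nonneg (fun m hm => Fintype.mem_piFinset.2 fun i =>
          mem_image_of_mem _ hm) fun m _ _ => prod_nonneg fun i _ => hg0 i (m i)
    _ = ∏ i, ∑ k ∈ u.image (· i), g i k := (prod_univ_sum _ _).symm
    _ ≤ ∏ i, ∑' k, g i k := prod_le_prod (fun i _ => sum_nonneg fun k _ => hg0 i k)
        fun i _ => (hg i).sum_le_tsum _ fun k _ => hg0 i k

theorem exists_one_lt_forall_mul_lt {ι : Type*} (s : Finset ι) {a b : ι → ℝ}
    (h : ∀ i ∈ s, a i < b i) : ∃ e > 1, ∀ i ∈ s, a i * e < b i := by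
  have hlim : ∀ i ∈ s, ∀ᶠ e in 𝓝[>] (1 : ℝ), a i * e < b i := fun i hi =>
    ((continuous_const.mul continuous_id).tendsto' 1 (a i) (mul_one _)).mono_left
      nhdsWithin_le_nhds |>.eventually_lt_const (h i hi)
  exact (eventually_mem_nhdsWithin.and ((eventually_all_finset s).2 hlim)).exists

theorem Fin.sum_mul_nonneg_of_tail_nonneg {r : ℕ} {w b : Fin r → ℝ} (hb : Monotone b)
    (hb0 : ∀ i, 0 ≤ b i) (hw : ∀ j : ℕ, 0 ≤ ∑ i ∈ tailIndices r j, w i) :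
    0 ≤ ∑ i, w i * b i := by
  induction r with
  | zero => simp
  | succ r ih =>
    have htail : ∀ j : ℕ, ∑ i ∈ tailIndices r j, w i.succ
        = ∑ i ∈ tailIndices (r + 1) (j + 1), w i := by
      intro j
      simp [tailIndices, sum_filter, Fin.sum_univ_succ]
    have hshift : 0 ≤ ∑ i : Fin r, w i.succ * (b i.succ - b 0) :=
      ih (fun i j hij => sub_le_sub_right (hb (Fin.succ_le_succ_iff.2 hij)) _)
        (fun i => sub_nonneg.2 (hb (Fin.zero_le _))) fun j => htail j ▸ hw (j + 1)
    have htotal : 0 ≤ ∑ i, w i := by simpa [tailIndices] using hw 0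
    -- Split `b` as `b 0 + (b - b 0)`: the second part vanishes at `0`, so only the shifted
    -- weights see it.
    calc 0 ≤ ∑ i : Fin r, w i.succ * (b i.succ - b 0) + b 0 * ∑ i, w i :=
          add_nonneg hshift (mul_nonneg (hb0 0) htotal)
      _ = ∑ i, w i * b i := by
          rw [Fin.sum_univ_succ (f := w), mul_add, mul_sum,
            Fin.sum_univ_succ (f := fun i => w i * b i)]
          simp only [mul_sub, sum_sub_distrib, mul_comm (b 0)]
          ring

theorem card_tailIndices (r j : ℕ) : #(tailIndices r j) = r - j := by
  unfold tailIndices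
  have := card_filter_add_card_filter_not (s := (univ : Finset (Fin r))) (fun i => (i : ℕ) < j)
  simp only [not_lt, Fin.card_filter_val_lt, card_univ, Fintype.card_fin] at this
  omega

theorem prod_rpow_neg_le_prod_rpow_neg {r : ℕ} {x σ : Fin r → ℝ} {e : ℝ} (hx : Monotone x)
    (hx1 : ∀ i, 1 ≤ x i) (hσ : ∀ j : ℕ, e * #(tailIndices r j) ≤ ∑ i ∈ tailIndices r j, σ i) :
    ∏ i, x i ^ (-σ i) ≤ ∏ i, x i ^ (-e) := by
  have hpos : ∀ i, 0 < x i := fun i => one_pos.trans_le (hx1 i)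
  simp only [Real.rpow_def_of_pos (hpos _), ← Real.exp_sum, Real.exp_le_exp]
  have := Fin.sum_mul_nonneg_of_tail_nonneg (w := fun i => σ i - e)
    (fun i j hij => Real.log_le_log (hpos i) (hx hij)) (fun i => Real.log_nonneg (hx1 i))
    fun j => by simpa [sum_sub_distrib, mul_comm] using hσ j
  simp only [sub_mul, sum_sub_distrib, sub_nonneg] at this
  simpa [mul_comm] using this

theorem mul_card_tailIndices_le_sum {r : ℕ} {σ : Fin r → ℝ} {e : ℝ}
    (h : ∀ k : ℕ, 1 ≤ k → k ≤ r → k * e ≤ ∑ i ∈ tailIndices r (r - k), σ i) (j : ℕ) :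
    e * #(tailIndices r j) ≤ ∑ i ∈ tailIndices r j, σ i := by
  rw [card_tailIndices]
  rcases le_or_gt r j with hj | hj
  · have : tailIndices r j = ∅ := filter_false_of_mem fun i _ => by omega
    simp [this, Nat.sub_eq_zero_of_le hj]
  · simpa [Nat.sub_sub_self hj.le, mul_comm] using h (r - j) (by omega) (Nat.sub_le r j)

theorem partialSum_mono {r : ℕ} (m : Fin r → ℕ) : Monotone (partialSum m) :=
  fun _ _ hij => sum_le_sum_of_subset (Iic_subset_Iic.2 hij)

theorem le_partialSum {r : ℕ} (m : Fin r → ℕ) (i : Fin r) : m i + 1 ≤ partialSum m i :=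
  single_le_sum (f := fun k => m k + 1) (fun _ _ => Nat.zero_le _) (mem_Iic.2 le_rfl)

theorem eulerZagier_abs_convergence_general
    (r : ℕ) (s : Fin r → ℂ)
    (hs : ∀ k : ℕ, 1 ≤ k → k ≤ r →
      (k : ℝ) < ∑ i ∈ Finset.univ.filter (fun i : Fin r => r - k ≤ (i : ℕ)), (s i).re) :
    Summable (fun m : Fin r → ℕ =>
      ‖∏ i : Fin r, ((partialSum m i : ℕ) : ℂ) ^ (-(s i))‖) := by
  obtain ⟨e, he1, he⟩ := exists_one_lt_forall_mul_lt (Icc 1 r) (a := fun k : ℕ => (k : ℝ))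
    fun k hk => hs k (mem_Icc.1 hk).1 (mem_Icc.1 hk).2
  have hσ := mul_card_tailIndices_le_sum (σ := fun i => (s i).re) (e := e)
    fun k hk1 hkr => (he k (mem_Icc.2 ⟨hk1, hkr⟩)).le
  have hbound (m : Fin r → ℕ) :
      ‖∏ i, ((partialSum m i : ℕ) : ℂ) ^ (-(s i))‖ ≤ ∏ i, ((m i : ℝ) + 1) ^ (-e) :=
    calc ‖∏ i, ((partialSum m i : ℕ) : ℂ) ^ (-(s i))‖
        = ∏ i, ((partialSum m i : ℕ) : ℝ) ^ (-(s i).re) := by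
          simp only [norm_prod, Complex.norm_natCast_cpow_of_pos
            ((Nat.succ_pos _).trans_le (le_partialSum m _)), Complex.neg_re]
      _ ≤ ∏ i, ((partialSum m i : ℕ) : ℝ) ^ (-e) :=
          prod_rpow_neg_le_prod_rpow_neg (fun _ _ hij => by exact_mod_cast partialSum_mono m hij)
            (fun i => by exact_mod_cast (Nat.succ_pos _).trans_le (le_partialSum m i)) hσ
      _ ≤ ∏ i, ((m i : ℝ) + 1) ^ (-e) :=
          prod_le_prod (fun _ _ => by positivity) fun i _ =>
            Real.rpow_le_rpow_of_nonpos (by positivity)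
              (by exact_mod_cast le_partialSum m i) (by linarith)
  have hzeta : Summable fun n : ℕ => ((n : ℝ) + 1) ^ (-e) := by
    exact_mod_cast (summable_nat_add_iff 1).2 (Real.summable_nat_rpow.2 (by linarith))
  exact (summable_pi_prod (fun _ _ => by positivity) fun _ => hzeta).of_nonneg_of_le
    (fun _ => norm_nonneg _) hbound

/-- the Euler–Zagier `r`-fold zeta series converges absolutely when
`Re(s_{r−k+1} + ⋯ + s_r) > k` for every `1 ≤ k ≤ r`. -/
theorem eulerZagier_abs_convergence
    (r : ℕ) (hr : 1 ≤ r) (s : Fin r → ℂ)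
    (hs : ∀ k : ℕ, 1 ≤ k → k ≤ r →
      (k : ℝ) < ∑ i ∈ Finset.univ.filter (fun i : Fin r => r - k ≤ (i : ℕ)), (s i).re) :
    Summable (fun m : Fin r → ℕ =>
      ‖∏ i : Fin r, ((partialSum m i : ℕ) : ℂ) ^ (-(s i))‖) :=
  eulerZagier_abs_convergence_general r s hs
end
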